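/- arXiv:2605.29156 — 3 statements merged into one kernel-verified Lean document; each statement's English description precedes it below -/
import Mathlib

section
/- Let n ≥ 1. Suppose the rollout noise variables ξ⁺, ξ₁⁻, …, ξₙ⁻ are independent real random variables, each having a Lebesgue density that is everywhere positive and symmetric about 0. Define Jₙ = (1/2)·P(S⁺ > S̄ₙ⁻) + (1/2)·P(S̄ₙ⁺ > S⁻), where the plus-side rollout averages use an independent copy of the same noise structure (i.e., ξ₁⁺, …, ξₙ⁺, ξ⁻ are independent with the same symmetry and positivity properties). Then: Jₙ > 1/2 if Δ > 0, Jₙ = 1/2 if Δ = 0, and Jₙ < 1/2 if Δ < 0. In particular Jₙ > 1/2 if and only if Δ > 0. -/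
open MeasureTheory ProbabilityTheory

/-- A real random variable has an everywhere-positive Lebesgue density that is
symmetric about 0. -/
def HasPosSymmDensity {Ω : Type*} [MeasurableSpace Ω] (P : Measure Ω) (X : Ω → ℝ) : Prop :=
  ∃ f : ℝ → ℝ, Measurable f ∧ (∀ x, 0 < f x) ∧ (∀ x, f (-x) = f x) ∧
    Measure.map X P = MeasureTheory.volume.withDensity (fun x => ENNReal.ofReal (f x))

namespace JudgeAux

open Set

/-- change of variables under negation for Lebesgue integrals on ℝ. -/
lemma lintegral_neg_volume (g : ℝ → ENNReal) (hg : Measurable g) :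
    ∫⁻ x, g (-x) = ∫⁻ x, g x := by
  conv_rhs => rw [← Measure.map_neg_eq_self (volume : Measure ℝ)]
  rw [lintegral_map hg measurable_neg]

/-- A positive symmetric density gives a symmetric law. -/
lemma map_neg_withDensity {f : ℝ → ℝ} (hf : Measurable f) (hsymm : ∀ x, f (-x) = f x) :
    Measure.map Neg.neg (volume.withDensity fun x => ENNReal.ofReal (f x)) =
      volume.withDensity fun x => ENNReal.ofReal (f x) := by
  ext s hs
  rw [Measure.map_apply measurable_neg hs,
    withDensity_apply _ (measurable_neg hs), withDensity_apply _ hs,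
    ← lintegral_indicator (measurable_neg hs), ← lintegral_indicator hs]
  rw [← lintegral_neg_volume (s.indicator fun x => ENNReal.ofReal (f x))
    ((hf.ennreal_ofReal).indicator hs)]
  congr 1
  ext x
  by_cases hx : -x ∈ s
  · simp [Set.indicator_of_mem, hx, Set.mem_preimage, hsymm]
  · simp [Set.indicator_of_notMem, hx, Set.mem_preimage]

lemma _root_.HasPosSymmDensity.symm_law {Ω : Type*} [MeasurableSpace Ω] {P : Measure Ω} {X : Ω → ℝ}
    (h : HasPosSymmDensity P X) :
    Measure.map Neg.neg (Measure.map X P) = Measure.map X P := by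
  obtain ⟨f, hf, _, hfsymm, hmap⟩ := h
  rw [hmap]
  exact map_neg_withDensity hf hfsymm

lemma densM_singleton {f : ℝ → ℝ} (t : ℝ) :
    (volume.withDensity fun x => ENNReal.ofReal (f x)) {t} = 0 := by
  rw [withDensity_apply _ (measurableSet_singleton t)]
  exact setLIntegral_measure_zero _ _ (measure_singleton t)

lemma densM_Ioc_pos {f : ℝ → ℝ} (hf : Measurable f) (hfpos : ∀ x, 0 < f x)
    {a b : ℝ} (hab : a < b) :
    0 < (volume.withDensity fun x => ENNReal.ofReal (f x)) (Ioc a b) := by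
  rw [pos_iff_ne_zero]
  intro h0
  rw [withDensity_apply _ measurableSet_Ioc, lintegral_eq_zero_iff hf.ennreal_ofReal] at h0
  have hfalse : ∀ᵐ x ∂(volume.restrict (Ioc a b)), False := by
    filter_upwards [h0] with x hx
    have := hfpos x
    simp only [Pi.zero_apply, ENNReal.ofReal_eq_zero] at hx
    linarith
  have h2 : volume (Ioc a b) = 0 := by
    rw [ae_iff] at hfalse
    simpa [Measure.restrict_apply_univ] using hfalse
  rw [Real.volume_Ioc] at h2
  exact absurd h2 (ENNReal.ofReal_pos.mpr (sub_pos.mpr hab)).ne'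

lemma lintegral_ne_zero {ν : Measure ℝ} [IsProbabilityMeasure ν] {g : ℝ → ENNReal}
    (hg : Measurable g) (hpos : ∀ y, g y ≠ 0) : ∫⁻ y, g y ∂ν ≠ 0 := by
  intro h
  rw [lintegral_eq_zero_iff hg] at h
  have hfalse : ∀ᵐ y ∂ν, False := by
    filter_upwards [h] with y hy; exact hpos y hy
  rw [ae_iff] at hfalse
  simp at hfalse

lemma half_identity {f : ℝ → ℝ} {μX : Measure ℝ} [IsProbabilityMeasure μX]
    (hμX : μX = volume.withDensity fun x => ENNReal.ofReal (f x))
    (hXs : Measure.map Neg.neg μX = μX) (t : ℝ) :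
    μX (Ioi t) + μX (Ioi (-t)) = 1 := by
  have h1 : μX (Ioi (-t)) = μX (Iio t) := by
    conv_lhs => rw [← hXs]
    rw [Measure.map_apply measurable_neg measurableSet_Ioi]
    congr 1
    ext x
    simp [neg_lt]
  rw [h1]
  have hd : Disjoint (Ioi t) (Iio t) := by
    rw [Set.disjoint_left]
    intro x hx hx'
    exact (not_lt.mpr (le_of_lt (hx : t < x)) : ¬ x < t) hx'
  rw [← measure_union hd measurableSet_Iio,
    show Ioi t ∪ Iio t = ({t} : Set ℝ)ᶜ by rw [Set.union_comm, Set.Iio_union_Ioi],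
    measure_compl (measurableSet_singleton t) (measure_ne_top _ _), measure_univ,
    hμX, densM_singleton, tsub_zero]

lemma key_int {f : ℝ → ℝ} (hf : Measurable f) (hfpos : ∀ x, 0 < f x)
    {μX ν : Measure ℝ} [IsProbabilityMeasure μX] [IsProbabilityMeasure ν]
    (hμX : μX = volume.withDensity fun x => ENNReal.ofReal (f x))
    (hXs : Measure.map Neg.neg μX = μX)
    (hνs : Measure.map Neg.neg ν = ν) (c : ℝ) :
    ((c < 0 → 1/2 < (∫⁻ y, μX (Ioi (c - y)) ∂ν).toReal) ∧
     (c = 0 → (∫⁻ y, μX (Ioi (c - y)) ∂ν).toReal = 1/2) ∧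
     (0 < c → (∫⁻ y, μX (Ioi (c - y)) ∂ν).toReal < 1/2)) := by
  have hmeasI : ∀ d : ℝ, Measurable fun y => μX (Ioi (d - y)) := by
    intro d
    exact Monotone.measurable fun y y' hyy' =>
      measure_mono (Set.Ioi_subset_Ioi (by linarith))
  have hbound : ∀ d : ℝ, (∫⁻ y, μX (Ioi (d - y)) ∂ν) ≤ 1 := by
    intro d
    calc ∫⁻ y, μX (Ioi (d - y)) ∂ν ≤ ∫⁻ _, 1 ∂ν := lintegral_mono fun y => prob_le_one
    _ = 1 := by simp
  have hne_top : ∀ d : ℝ, (∫⁻ y, μX (Ioi (d - y)) ∂ν) ≠ ⊤ :=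
    fun d => ((hbound d).trans_lt ENNReal.one_lt_top).ne
  have hmeasIoi : Measurable fun y : ℝ => μX (Ioi y) :=
    Antitone.measurable fun y y' hyy' => measure_mono (Set.Ioi_subset_Ioi hyy')
  have e1 : ∫⁻ y, μX (Ioi (0 - y)) ∂ν = ∫⁻ y, μX (Ioi y) ∂ν := by
    conv_lhs => rw [← hνs]
    rw [lintegral_map (hmeasI 0) measurable_neg]
    simp
  have e2 : (∫⁻ y, μX (Ioi (0 - y)) ∂ν) + (∫⁻ y, μX (Ioi (0 - y)) ∂ν) = 1 := by
    nth_rewrite 1 [e1]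
    rw [← lintegral_add_left hmeasIoi]
    simp only [zero_sub]
    rw [show (fun y : ℝ => μX (Ioi y) + μX (Ioi (-y))) = fun _ => (1 : ENNReal) from
      funext fun y => half_identity hμX hXs y]
    simp
  have hhalf : (∫⁻ y, μX (Ioi (0 - y)) ∂ν).toReal = 1/2 := by
    have := congrArg ENNReal.toReal e2
    rw [ENNReal.toReal_add (hne_top 0) (hne_top 0), ENNReal.toReal_one] at this
    linarith
  refine ⟨?_, ?_, ?_⟩
  · intro hc
    have hsplit : (∫⁻ y, μX (Ioi (c - y)) ∂ν)
        = (∫⁻ y, μX (Ioc (c - y) (0 - y)) ∂ν) + ∫⁻ y, μX (Ioi (0 - y)) ∂ν := by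
      rw [← lintegral_add_right _ (hmeasI 0)]
      congr 1
      funext y
      rw [← measure_union (Set.Ioc_disjoint_Ioi le_rfl) measurableSet_Ioi,
        Set.Ioc_union_Ioi_eq_Ioi (by linarith)]
    have hDmeas : Measurable fun y => μX (Ioc (c - y) (0 - y)) := by
      have hrw : ∀ y : ℝ, μX (Ioc (c - y) (0 - y)) = μX (Ioi (c - y)) - μX (Ioi (0 - y)) := by
        intro y
        rw [← Set.Ioi_diff_Ioi,
          measure_diff (Set.Ioi_subset_Ioi (by linarith)) measurableSet_Ioi.nullMeasurableSet
            (measure_ne_top _ _)]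
      simp only [hrw]
      exact (hmeasI c).sub (hmeasI 0)
    have hDne : (∫⁻ y, μX (Ioc (c - y) (0 - y)) ∂ν) ≠ 0 :=
      lintegral_ne_zero hDmeas fun y => by
        rw [hμX]
        exact (densM_Ioc_pos hf hfpos (by linarith)).ne'
    have hDle : (∫⁻ y, μX (Ioc (c - y) (0 - y)) ∂ν) ≤ (∫⁻ y, μX (Ioi (c - y)) ∂ν) := by
      rw [hsplit]; exact le_add_right le_rfl
    have hDnetop : (∫⁻ y, μX (Ioc (c - y) (0 - y)) ∂ν) ≠ ⊤ :=
      ((hDle.trans (hbound c)).trans_lt ENNReal.one_lt_top).ne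
    have := congrArg ENNReal.toReal hsplit
    rw [ENNReal.toReal_add hDnetop (hne_top 0), hhalf] at this
    have hpos : 0 < (∫⁻ y, μX (Ioc (c - y) (0 - y)) ∂ν).toReal :=
      ENNReal.toReal_pos hDne hDnetop
    linarith
  · intro hc
    subst hc
    exact hhalf
  · intro hc
    have hsplit : (∫⁻ y, μX (Ioi (0 - y)) ∂ν)
        = (∫⁻ y, μX (Ioc (0 - y) (c - y)) ∂ν) + ∫⁻ y, μX (Ioi (c - y)) ∂ν := by
      rw [← lintegral_add_right _ (hmeasI c)]
      congr 1
      funext y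
      rw [← measure_union (Set.Ioc_disjoint_Ioi le_rfl) measurableSet_Ioi,
        Set.Ioc_union_Ioi_eq_Ioi (by linarith)]
    have hDmeas : Measurable fun y => μX (Ioc (0 - y) (c - y)) := by
      have hrw : ∀ y : ℝ, μX (Ioc (0 - y) (c - y)) = μX (Ioi (0 - y)) - μX (Ioi (c - y)) := by
        intro y
        rw [← Set.Ioi_diff_Ioi,
          measure_diff (Set.Ioi_subset_Ioi (by linarith)) measurableSet_Ioi.nullMeasurableSet
            (measure_ne_top _ _)]
      simp only [hrw]
      exact (hmeasI 0).sub (hmeasI c)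
    have hDne : (∫⁻ y, μX (Ioc (0 - y) (c - y)) ∂ν) ≠ 0 :=
      lintegral_ne_zero hDmeas fun y => by
        rw [hμX]
        exact (densM_Ioc_pos hf hfpos (by linarith)).ne'
    have hDle : (∫⁻ y, μX (Ioc (0 - y) (c - y)) ∂ν) ≤ (∫⁻ y, μX (Ioi (0 - y)) ∂ν) := by
      rw [hsplit]; exact le_add_right le_rfl
    have hDnetop : (∫⁻ y, μX (Ioc (0 - y) (c - y)) ∂ν) ≠ ⊤ :=
      ((hDle.trans (hbound 0)).trans_lt ENNReal.one_lt_top).ne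
    have := congrArg ENNReal.toReal hsplit
    rw [ENNReal.toReal_add hDnetop (hne_top c), hhalf] at this
    have hpos : 0 < (∫⁻ y, μX (Ioc (0 - y) (c - y)) ∂ν).toReal :=
      ENNReal.toReal_pos hDne hDnetop
    linarith

variable {Ω : Type*} [MeasurableSpace Ω] {P : Measure Ω} [IsProbabilityMeasure P]

/-- rewrite the probability of the event as a slice integral. -/
lemma prob_eq_lintegral (X Y : Ω → ℝ) (hX : Measurable X) (hY : Measurable Y)
    (hindep : IndepFun Y X P) (c : ℝ) :
    P {ω | c < X ω + Y ω} = ∫⁻ y, (Measure.map X P) (Ioi (c - y)) ∂(Measure.map Y P) := by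
  haveI : IsProbabilityMeasure (Measure.map X P) := Measure.isProbabilityMeasure_map hX.aemeasurable
  haveI : IsProbabilityMeasure (Measure.map Y P) := Measure.isProbabilityMeasure_map hY.aemeasurable
  have hs : MeasurableSet {p : ℝ × ℝ | c < p.1 + p.2} :=
    measurableSet_lt measurable_const (measurable_fst.add measurable_snd)
  have hmap : Measure.map (fun ω => (Y ω, X ω)) P = (Measure.map Y P).prod (Measure.map X P) :=
    (indepFun_iff_map_prod_eq_prod_map_map hY.aemeasurable hX.aemeasurable).mp hindep
  have h1 : P {ω | c < X ω + Y ω}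
      = Measure.map (fun ω => (Y ω, X ω)) P {p : ℝ × ℝ | c < p.1 + p.2} := by
    rw [Measure.map_apply (hY.prodMk hX) hs]
    congr 1
    ext ω
    simp [add_comm]
  rw [h1, hmap, Measure.prod_apply hs]
  congr 1
  funext y
  congr 1
  ext x
  simp only [Set.mem_preimage, Set.mem_setOf_eq, Set.mem_Ioi]
  constructor <;> intro h' <;> linarith

omit [IsProbabilityMeasure P] in
/-- symmetric law is preserved by odd measurable post-composition. -/
lemma odd_comp_symm {Z : Ω → ℝ} (hZ : Measurable Z)
    (hZs : Measure.map Neg.neg (Measure.map Z P) = Measure.map Z P)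
    {φ : ℝ → ℝ} (hφ : Measurable φ) (hodd : ∀ t, φ (-t) = -φ t) :
    Measure.map Neg.neg (Measure.map (fun ω => φ (Z ω)) P)
      = Measure.map (fun ω => φ (Z ω)) P := by
  have h1 : Measure.map (fun ω => φ (Z ω)) P = Measure.map φ (Measure.map Z P) :=
    (Measure.map_map hφ hZ).symm
  rw [h1, Measure.map_map measurable_neg hφ]
  have h2 : (Neg.neg ∘ φ) = φ ∘ (Neg.neg : ℝ → ℝ) := by
    funext t
    simp [Function.comp, hodd]
  rw [h2, ← Measure.map_map hφ measurable_neg, hZs]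

/-- the sum of two independent symmetric r.v.s is symmetric. -/
lemma add_symm {X Y : Ω → ℝ} (hX : Measurable X) (hY : Measurable Y)
    (hXs : Measure.map Neg.neg (Measure.map X P) = Measure.map X P)
    (hYs : Measure.map Neg.neg (Measure.map Y P) = Measure.map Y P)
    (h : IndepFun X Y P) :
    Measure.map Neg.neg (Measure.map (fun ω => X ω + Y ω) P)
      = Measure.map (fun ω => X ω + Y ω) P := by
  haveI : IsProbabilityMeasure (Measure.map X P) := Measure.isProbabilityMeasure_map hX.aemeasurable
  haveI : IsProbabilityMeasure (Measure.map Y P) := Measure.isProbabilityMeasure_map hY.aemeasurable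
  have hpair : Measure.map (fun ω => (X ω, Y ω)) P = (Measure.map X P).prod (Measure.map Y P) :=
    (indepFun_iff_map_prod_eq_prod_map_map hX.aemeasurable hY.aemeasurable).mp h
  have h1 : Measure.map (fun ω => X ω + Y ω) P
      = Measure.map (fun p : ℝ × ℝ => p.1 + p.2) ((Measure.map X P).prod (Measure.map Y P)) := by
    rw [← hpair, Measure.map_map measurable_add (hX.prodMk hY)]
    rfl
  rw [h1, Measure.map_map measurable_neg measurable_add]
  have h2 : (Neg.neg ∘ fun p : ℝ × ℝ => p.1 + p.2)
      = (fun p : ℝ × ℝ => p.1 + p.2) ∘ Prod.map (Neg.neg : ℝ → ℝ) (Neg.neg : ℝ → ℝ) := by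
    funext p
    simp [Function.comp, neg_add, add_comm]
  rw [h2, ← Measure.map_map measurable_add (measurable_neg.prodMap measurable_neg),
    ← Measure.map_prod_map _ _ measurable_neg measurable_neg, hXs, hYs]

/-- sums of independent symmetric r.v.s are symmetric. -/
lemma finset_sum_symm {ι : Type*} {g : ι → Ω → ℝ}
    (hmeas : ∀ i, Measurable (g i))
    (hsymm : ∀ i, Measure.map Neg.neg (Measure.map (g i) P) = Measure.map (g i) P)
    (hindep : iIndepFun (m := fun _ => Real.measurableSpace) g P) (s : Finset ι) :
    Measure.map Neg.neg (Measure.map (fun ω => ∑ i ∈ s, g i ω) P)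
      = Measure.map (fun ω => ∑ i ∈ s, g i ω) P := by
  classical
  induction s using Finset.cons_induction with
  | empty =>
      simp only [Finset.sum_empty]
      have hc : Measure.map (fun _ : Ω => (0 : ℝ)) P = Measure.dirac 0 := by
        rw [Measure.map_const]
        simp
      rw [hc, Measure.map_dirac' measurable_neg, neg_zero]
  | cons i s hi ih =>
      have hsum_meas : Measurable fun ω => ∑ j ∈ s, g j ω :=
        Finset.measurable_sum s fun j _ => hmeas j
      have hind : IndepFun (g i) (fun ω => ∑ j ∈ s, g j ω) P := by
        have h := (hindep.indepFun_finset_sum_of_notMem hmeas hi).symm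
        have hfun : (∑ j ∈ s, g j) = fun ω => ∑ j ∈ s, g j ω := by
          funext ω
          simp [Finset.sum_apply]
        rwa [hfun] at h
      have := add_symm (hmeas i) hsum_meas (hsymm i) ih hind
      simp only [Finset.sum_cons]
      exact this

/-- one side of the judge probability. -/
lemma side (X Y : Ω → ℝ) (hX : Measurable X) (hY : Measurable Y)
    {f : ℝ → ℝ} (hf : Measurable f) (hfpos : ∀ x, 0 < f x)
    (hmapX : Measure.map X P = volume.withDensity fun x => ENNReal.ofReal (f x))
    (hXs : Measure.map Neg.neg (Measure.map X P) = Measure.map X P)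
    (hYs : Measure.map Neg.neg (Measure.map Y P) = Measure.map Y P)
    (hindep : IndepFun Y X P) (c : ℝ) :
    ((c < 0 → 1/2 < (P {ω | c < X ω + Y ω}).toReal) ∧
     (c = 0 → (P {ω | c < X ω + Y ω}).toReal = 1/2) ∧
     (0 < c → (P {ω | c < X ω + Y ω}).toReal < 1/2)) := by
  haveI : IsProbabilityMeasure (Measure.map X P) := Measure.isProbabilityMeasure_map hX.aemeasurable
  haveI : IsProbabilityMeasure (Measure.map Y P) := Measure.isProbabilityMeasure_map hY.aemeasurable
  rw [prob_eq_lintegral X Y hX hY hindep c]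
  exact key_int hf hfpos hmapX hXs hYs c

end JudgeAux

namespace JudgeAux

variable {Ω : Type*} [MeasurableSpace Ω] {P : Measure Ω} [IsProbabilityMeasure P]

/-- extract symmetry of the sum law and independence from the `Option`-indexed family. -/
lemma prep {n : ℕ} (Z : Ω → ℝ) (ξs : Fin n → Ω → ℝ)
    (hmZ : Measurable Z) (hms : ∀ m, Measurable (ξs m))
    (hZsym : Measure.map Neg.neg (Measure.map Z P) = Measure.map Z P)
    (hsym : ∀ m, Measure.map Neg.neg (Measure.map (ξs m) P) = Measure.map (ξs m) P)
    (hindep : iIndepFun (m := fun _ => Real.measurableSpace)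
      (fun i : Option (Fin n) => i.elim Z (fun m => ξs m)) P) :
    (Measure.map Neg.neg (Measure.map (fun ω => ∑ m, ξs m ω) P)
        = Measure.map (fun ω => ∑ m, ξs m ω) P)
      ∧ IndepFun (fun ω => ∑ m, ξs m ω) Z P := by
  classical
  set g : Option (Fin n) → Ω → ℝ := fun i => i.elim Z (fun m => ξs m) with hg
  have hgmeas : ∀ i, Measurable (g i) := by
    intro i
    cases i with
    | none => exact hmZ
    | some m => exact hms m
  have hgsym : ∀ i, Measure.map Neg.neg (Measure.map (g i) P) = Measure.map (g i) P := by
    intro i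
    cases i with
    | none => exact hZsym
    | some m => exact hsym m
  have hsum_eq : (fun ω => ∑ i ∈ Finset.univ.map Function.Embedding.some, g i ω)
      = fun ω => ∑ m, ξs m ω := by
    funext ω
    rw [Finset.sum_map]
    rfl
  constructor
  · have := finset_sum_symm hgmeas hgsym hindep (Finset.univ.map Function.Embedding.some)
    rwa [hsum_eq] at this
  · have hnone : (none : Option (Fin n)) ∉ Finset.univ.map Function.Embedding.some := by
      simp
    have h := hindep.indepFun_finset_sum_of_notMem hgmeas hnone
    have hfun : (∑ j ∈ Finset.univ.map Function.Embedding.some, g j)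
        = fun ω => ∑ m, ξs m ω := by
      funext ω
      rw [Finset.sum_apply]
      exact congrFun hsum_eq ω
    rwa [hfun] at h

end JudgeAux

open JudgeAux in
/-- **Preference consistency of the judge-side reward.**
With independent rollout noise having everywhere-positive symmetric Lebesgue densities,
`Jₙ > 1/2` iff `Δ > 0`, `Jₙ = 1/2` when `Δ = 0`, and `Jₙ < 1/2` when `Δ < 0`. -/
theorem judge_side_preference_consistency
    {Ω : Type*} [MeasurableSpace Ω] (P : Measure Ω) [IsProbabilityMeasure P]
    (n : ℕ) (hn : 1 ≤ n) (μp μm : ℝ)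
    (ξp ξm : Ω → ℝ) (ξps ξms : Fin n → Ω → ℝ)
    (hmξp : Measurable ξp) (hmξm : Measurable ξm)
    (hmξps : ∀ m, Measurable (ξps m)) (hmξms : ∀ m, Measurable (ξms m))
    (hdξp : HasPosSymmDensity P ξp) (hdξm : HasPosSymmDensity P ξm)
    (hdξps : ∀ m, HasPosSymmDensity P (ξps m))
    (hdξms : ∀ m, HasPosSymmDensity P (ξms m))
    (hindep₁ : iIndepFun (m := fun _ => Real.measurableSpace)
      (fun i : Option (Fin n) => i.elim ξp (fun m => ξms m)) P)
    (hindep₂ : iIndepFun (m := fun _ => Real.measurableSpace)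
      (fun i : Option (Fin n) => i.elim ξm (fun m => ξps m)) P) :
    ((0 < μp - μm →
        1/2 < (1/2) * (P {ω | μm + (1/(n:ℝ)) * ∑ m, ξms m ω < μp + ξp ω}).toReal
            + (1/2) * (P {ω | μm + ξm ω < μp + (1/(n:ℝ)) * ∑ m, ξps m ω}).toReal) ∧
     (μp - μm = 0 →
        (1/2) * (P {ω | μm + (1/(n:ℝ)) * ∑ m, ξms m ω < μp + ξp ω}).toReal
            + (1/2) * (P {ω | μm + ξm ω < μp + (1/(n:ℝ)) * ∑ m, ξps m ω}).toReal = 1/2) ∧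
     (μp - μm < 0 →
        (1/2) * (P {ω | μm + (1/(n:ℝ)) * ∑ m, ξms m ω < μp + ξp ω}).toReal
            + (1/2) * (P {ω | μm + ξm ω < μp + (1/(n:ℝ)) * ∑ m, ξps m ω}).toReal < 1/2)) ∧
    (1/2 < (1/2) * (P {ω | μm + (1/(n:ℝ)) * ∑ m, ξms m ω < μp + ξp ω}).toReal
         + (1/2) * (P {ω | μm + ξm ω < μp + (1/(n:ℝ)) * ∑ m, ξps m ω}).toReal
      ↔ 0 < μp - μm) := by
  classical
  obtain ⟨f₁, hf₁, hf₁pos, hf₁symm, hmap₁⟩ := hdξp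
  obtain ⟨f₂, hf₂, hf₂pos, hf₂symm, hmap₂⟩ := hdξm
  have hξpsym : Measure.map Neg.neg (Measure.map ξp P) = Measure.map ξp P := by
    rw [hmap₁]; exact map_neg_withDensity hf₁ hf₁symm
  have hξmsym : Measure.map Neg.neg (Measure.map ξm P) = Measure.map ξm P := by
    rw [hmap₂]; exact map_neg_withDensity hf₂ hf₂symm
  have hsym_ms : ∀ m, Measure.map Neg.neg (Measure.map (ξms m) P) = Measure.map (ξms m) P :=
    fun m => (hdξms m).symm_law
  have hsym_ps : ∀ m, Measure.map Neg.neg (Measure.map (ξps m) P) = Measure.map (ξps m) P :=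
    fun m => (hdξps m).symm_law
  obtain ⟨hSsym₁, hSind₁⟩ := prep ξp ξms hmξp hmξms hξpsym hsym_ms hindep₁
  obtain ⟨hSsym₂, hSind₂⟩ := prep ξm ξps hmξm hmξps hξmsym hsym_ps hindep₂
  have hS₁meas : Measurable fun ω => ∑ m, ξms m ω :=
    Finset.measurable_sum _ fun m _ => hmξms m
  have hS₂meas : Measurable fun ω => ∑ m, ξps m ω :=
    Finset.measurable_sum _ fun m _ => hmξps m
  -- side 1 : X = ξp, Y = -((1/n) * sum of ξms)
  have hY₁meas : Measurable fun ω => -((1/(n:ℝ)) * ∑ m, ξms m ω) :=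
    (measurable_const.mul hS₁meas).neg
  have hY₁sym : Measure.map Neg.neg (Measure.map (fun ω => -((1/(n:ℝ)) * ∑ m, ξms m ω)) P)
      = Measure.map (fun ω => -((1/(n:ℝ)) * ∑ m, ξms m ω)) P :=
    odd_comp_symm hS₁meas hSsym₁
      ((by fun_prop : Measurable fun t : ℝ => -((1/(n:ℝ)) * t)))
      (fun t => by ring)
  have hindY₁ : IndepFun (fun ω => -((1/(n:ℝ)) * ∑ m, ξms m ω)) ξp P :=
    hSind₁.comp
      ((by fun_prop : Measurable fun t : ℝ => -((1/(n:ℝ)) * t)))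
      measurable_id
  have h₁ :
      ((μm - μp < 0 →
        1/2 < (P {ω | μm - μp < ξp ω + -((1/(n:ℝ)) * ∑ m, ξms m ω)}).toReal) ∧
       (μm - μp = 0 →
        (P {ω | μm - μp < ξp ω + -((1/(n:ℝ)) * ∑ m, ξms m ω)}).toReal = 1/2) ∧
       (0 < μm - μp →
        (P {ω | μm - μp < ξp ω + -((1/(n:ℝ)) * ∑ m, ξms m ω)}).toReal < 1/2)) :=
    side ξp (fun ω => -((1/(n:ℝ)) * ∑ m, ξms m ω)) hmξp hY₁meas hf₁ hf₁pos hmap₁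
      hξpsym hY₁sym hindY₁ (μm - μp)
  -- side 2 : X = -ξm, Y = (1/n) * sum of ξps
  have hmapX₂ : Measure.map (fun ω => -ξm ω) P
      = volume.withDensity fun x => ENNReal.ofReal (f₂ x) := by
    have h : Measure.map (fun ω => -ξm ω) P = Measure.map Neg.neg (Measure.map ξm P) :=
      (Measure.map_map measurable_neg hmξm).symm
    rw [h, hξmsym, hmap₂]
  have hX₂sym : Measure.map Neg.neg (Measure.map (fun ω => -ξm ω) P)
      = Measure.map (fun ω => -ξm ω) P := by
    rw [hmapX₂]
    exact map_neg_withDensity hf₂ hf₂symm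
  have hY₂meas : Measurable fun ω => (1/(n:ℝ)) * ∑ m, ξps m ω :=
    measurable_const.mul hS₂meas
  have hY₂sym : Measure.map Neg.neg (Measure.map (fun ω => (1/(n:ℝ)) * ∑ m, ξps m ω) P)
      = Measure.map (fun ω => (1/(n:ℝ)) * ∑ m, ξps m ω) P :=
    odd_comp_symm hS₂meas hSsym₂
      ((by fun_prop : Measurable fun t : ℝ => (1/(n:ℝ)) * t))
      (fun t => by ring)
  have hindY₂ : IndepFun (fun ω => (1/(n:ℝ)) * ∑ m, ξps m ω) (fun ω => -ξm ω) P :=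
    hSind₂.comp
      ((by fun_prop : Measurable fun t : ℝ => (1/(n:ℝ)) * t))
      measurable_neg
  have h₂ :
      ((μm - μp < 0 →
        1/2 < (P {ω | μm - μp < -ξm ω + (1/(n:ℝ)) * ∑ m, ξps m ω}).toReal) ∧
       (μm - μp = 0 →
        (P {ω | μm - μp < -ξm ω + (1/(n:ℝ)) * ∑ m, ξps m ω}).toReal = 1/2) ∧
       (0 < μm - μp →
        (P {ω | μm - μp < -ξm ω + (1/(n:ℝ)) * ∑ m, ξps m ω}).toReal < 1/2)) :=
    side (fun ω => -ξm ω) (fun ω => (1/(n:ℝ)) * ∑ m, ξps m ω) hmξm.neg hY₂meas hf₂ hf₂pos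
      hmapX₂ hX₂sym hY₂sym hindY₂ (μm - μp)
  -- rewrite the events
  have he₁ : {ω | μm + (1/(n:ℝ)) * ∑ m, ξms m ω < μp + ξp ω}
      = {ω | μm - μp < ξp ω + -((1/(n:ℝ)) * ∑ m, ξms m ω)} := by
    ext ω
    simp only [Set.mem_setOf_eq]
    constructor <;> intro h <;> linarith
  have he₂ : {ω | μm + ξm ω < μp + (1/(n:ℝ)) * ∑ m, ξps m ω}
      = {ω | μm - μp < -ξm ω + (1/(n:ℝ)) * ∑ m, ξps m ω} := by
    ext ω
    simp only [Set.mem_setOf_eq]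
    constructor <;> intro h <;> linarith
  rw [he₁, he₂]
  obtain ⟨h1lt, h1eq, h1gt⟩ := h₁
  obtain ⟨h2lt, h2eq, h2gt⟩ := h₂
  refine ⟨⟨fun h => ?_, fun h => ?_, fun h => ?_⟩, ?_, fun h => ?_⟩
  · have a := h1lt (by linarith)
    have b := h2lt (by linarith)
    linarith
  · have a := h1eq (by linarith)
    have b := h2eq (by linarith)
    linarith
  · have a := h1gt (by linarith)
    have b := h2gt (by linarith)
    linarith
  · intro h
    by_contra hnot
    push_neg at hnot
    rcases eq_or_lt_of_le hnot with he | hl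
    · have a := h1eq (by linarith)
      have b := h2eq (by linarith)
      linarith
    · have a := h1gt (by linarith)
      have b := h2gt (by linarith)
      linarith
  · have a := h1lt (by linarith)
    have b := h2lt (by linarith)
    linarith
end

section
/- Let Δ > 0, σ₊ > 0, σ₋ > 0, and let n > 1 be a natural number. Then (1/2)·[ Φ( Δ / √(σ₊² + σ₋²/n) ) + Φ( Δ / √(σ₋² + σ₊²/n) ) ] > Φ( Δ / √(σ₊² + σ₋²) ). That is, under Gaussian rollout noise with Δ > 0, comparing each rollout against the opposite response's average of n rollouts yields a strictly higher preference recovery probability than a single pairwise comparison whenever n > 1. -/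
open MeasureTheory ProbabilityTheory

/-- The standard Gaussian cumulative distribution function `Φ`. -/
noncomputable def stdGaussianCDF (x : ℝ) : ℝ :=
  (ProbabilityTheory.gaussianReal 0 1 (Set.Iic x)).toReal

lemma stdGaussianCDF_strictMono : StrictMono stdGaussianCDF := by
  intro a b hab
  unfold stdGaussianCDF
  have h1 : (1 : NNReal) ≠ 0 := one_ne_zero
  have hpos : gaussianReal 0 1 (Set.Ioc a b) ≠ 0 := by
    intro h0
    have := (gaussianReal_absolutelyContinuous' 0 h1) h0
    rw [Real.volume_Ioc] at this
    simp only [ENNReal.ofReal_eq_zero, sub_nonpos] at this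
    exact absurd this (not_le.2 hab)
  have hunion : Set.Iic b = Set.Iic a ∪ Set.Ioc a b := (Set.Iic_union_Ioc_eq_Iic hab.le).symm
  have hdisj : Disjoint (Set.Iic a) (Set.Ioc a b) := by
    simp [Set.disjoint_left]
    intro x hx hax
    exact absurd hax (not_lt.2 hx)
  have hmeas : gaussianReal 0 1 (Set.Iic b)
      = gaussianReal 0 1 (Set.Iic a) + gaussianReal 0 1 (Set.Ioc a b) := by
    rw [hunion, measure_union hdisj measurableSet_Ioc]
  have hfin : ∀ s : Set ℝ, gaussianReal 0 1 s ≠ ⊤ := fun s => measure_ne_top _ s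
  rw [hmeas, ENNReal.toReal_add (hfin _) (hfin _)]
  have : 0 < (gaussianReal 0 1 (Set.Ioc a b)).toReal :=
    ENNReal.toReal_pos hpos (hfin _)
  linarith

/-- For `Δ > 0` and `n > 1`, opposite-side averaging strictly improves over a single
pairwise comparison:
`(1/2)[Φ(Δ/√(σ₊² + σ₋²/n)) + Φ(Δ/√(σ₋² + σ₊²/n))] > Φ(Δ/√(σ₊² + σ₋²))`. -/
theorem averaging_beats_single_comparison
    (Δ σp σm : ℝ) (hΔ : 0 < Δ) (hσp : 0 < σp) (hσm : 0 < σm)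
    (n : ℕ) (hn : 1 < n) :
    stdGaussianCDF (Δ / Real.sqrt (σp^2 + σm^2)) <
      (1/2) * (stdGaussianCDF (Δ / Real.sqrt (σp^2 + σm^2 / n))
             + stdGaussianCDF (Δ / Real.sqrt (σm^2 + σp^2 / n))) := by
  have hn1 : (1 : ℝ) < n := by exact_mod_cast hn
  have hp2 : 0 < σp^2 := pow_pos hσp 2
  have hm2 : 0 < σm^2 := pow_pos hσm 2
  have key : ∀ x y : ℝ, 0 < x → 0 < y →
      stdGaussianCDF (Δ / Real.sqrt (x + y)) < stdGaussianCDF (Δ / Real.sqrt (x + y / n)) := by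
    intro x y hx hy
    apply stdGaussianCDF_strictMono
    have hyn : y / n < y := by
      rw [div_lt_iff₀ (by linarith)]
      nlinarith
    have h1 : 0 < x + y / n := by positivity
    have h2 : 0 < x + y := by linarith
    apply div_lt_div_of_pos_left hΔ (Real.sqrt_pos.2 h1)
    exact Real.sqrt_lt_sqrt h1.le (by linarith)
  have k1 := key (σp^2) (σm^2) hp2 hm2
  have k2 := key (σm^2) (σp^2) hm2 hp2
  rw [add_comm (σm^2) (σp^2)] at k2
  linarith
end

section
/- (Phase-wise stationary neighborhood for the true objective, explicit bound.) Let (Ω, 𝔉, P) be a probability space with a filtration (𝔉ₜ)_{t≥0}, let d ≥ 1, and let L : ℝ^d → ℝ and J : ℝ^d → ℝ be differentiable, with L having L_b-Lipschitz-continuous gradient (L_b > 0) and L(θ) ≤ L* for all θ. Fix T ≥ 1, G > 0, σ² ≥ 0, B ≥ 0, and a step size ηₜ = η₀/√T with 0 < η₀ ≤ 1/L_b. Let (θₜ)_{t=0}^{T} and (gₜ)_{t=0}^{T−1} satisfy θₜ 𝔉ₜ-measurable, gₜ 𝔉_{t+1}-measurable, θ_{t+1} = θₜ + ηₜ·gₜ,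 E[gₜ | 𝔉ₜ] = ∇L(θₜ) almost surely, E[‖gₜ − ∇L(θₜ)‖² | 𝔉ₜ] ≤ σ²/G almost surely, with L(θₜ), ‖∇L(θₜ)‖², ‖∇J(θₜ)‖², and ‖gₜ‖² integrable for every t. Assume moreover the surrogate-to-true gradient gap bound E‖∇J(θₜ) − ∇L(θₜ)‖² ≤ B for every 0 ≤ t ≤ T−1. Then (1/T)·Σ_{t=0}^{T−1} E‖∇J(θₜ)‖² ≤ 4·(L* − E[L(θ₀)])/(η₀·√T) + 2·L_b·η₀·σ²/(G·√T) + 2·B. -/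
open MeasureTheory ProbabilityTheory

local notation "⟪" x ", " y "⟫_ℝ" => @inner ℝ _ _ x y

lemma descent_aux {d : ℕ} (L : EuclideanSpace ℝ (Fin d) → ℝ) (Lb : ℝ) (hLb : 0 ≤ Lb)
    (hdiff : Differentiable ℝ L)
    (hlip : ∀ x y, ‖gradient L x - gradient L y‖ ≤ Lb * ‖x - y‖)
    (x v : EuclideanSpace ℝ (Fin d)) :
    L x + ⟪gradient L x, v⟫_ℝ - Lb / 2 * ‖v‖ ^ 2 ≤ L (x + v) := by
  have hgc : Continuous (gradient L) := by
    refine (LipschitzWith.of_dist_le_mul (K := ⟨Lb, hLb⟩) ?_).continuous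
    intro a b; rw [dist_eq_norm, dist_eq_norm]; exact hlip a b
  have hd : ∀ s : ℝ, HasDerivAt (fun s : ℝ => L (x + s • v))
      (⟪gradient L (x + s • v), v⟫_ℝ) s := by
    intro s
    have h1 : HasFDerivAt L (InnerProductSpace.toDual ℝ _ (gradient L (x + s • v)))
        (x + s • v) := (hdiff _).hasGradientAt
    have h2 : HasDerivAt (fun s : ℝ => x + s • v) v s := by
      simpa using ((hasDerivAt_id s).smul_const v).const_add x
    simpa [InnerProductSpace.toDual_apply_apply, Function.comp_def] using h1.comp_hasDerivAt s h2
  have hcont : Continuous fun s : ℝ => ⟪gradient L (x + s • v), v⟫_ℝ :=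
    ((hgc.comp (by continuity)).inner continuous_const)
  have key : L (x + v) - L x = ∫ s in (0:ℝ)..1, ⟪gradient L (x + s • v), v⟫_ℝ := by
    have := intervalIntegral.integral_eq_sub_of_hasDerivAt (f := fun s : ℝ => L (x + s • v))
      (fun s _ => hd s) (hcont.intervalIntegrable 0 1)
    rw [this]; simp
  have hlow : ∀ s ∈ Set.Icc (0:ℝ) 1,
      ⟪gradient L x, v⟫_ℝ - Lb * ‖v‖ ^ 2 * s ≤ ⟪gradient L (x + s • v), v⟫_ℝ := by
    intro s hs
    have h1 : ⟪gradient L x - gradient L (x + s • v), v⟫_ℝ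
        ≤ ‖gradient L x - gradient L (x + s • v)‖ * ‖v‖ :=
      real_inner_le_norm _ _
    have h2 : ‖gradient L x - gradient L (x + s • v)‖ ≤ Lb * (s * ‖v‖) := by
      have := hlip x (x + s • v)
      simpa [norm_smul, abs_of_nonneg hs.1] using this
    have h3 : ⟪gradient L x - gradient L (x + s • v), v⟫_ℝ
        = ⟪gradient L x, v⟫_ℝ - ⟪gradient L (x + s • v), v⟫_ℝ := inner_sub_left _ _ _
    nlinarith [norm_nonneg v, mul_le_mul_of_nonneg_right h2 (norm_nonneg v)]
  have mono : ∫ s in (0:ℝ)..1, (⟪gradient L x, v⟫_ℝ - Lb * ‖v‖ ^ 2 * s)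
      ≤ ∫ s in (0:ℝ)..1, ⟪gradient L (x + s • v), v⟫_ℝ := by
    apply intervalIntegral.integral_mono_on (by norm_num)
      ((by continuity : Continuous fun s : ℝ =>
        ⟪gradient L x, v⟫_ℝ - Lb * ‖v‖ ^ 2 * s).intervalIntegrable 0 1)
      (hcont.intervalIntegrable 0 1) hlow
  have comp : ∫ s in (0:ℝ)..1, (⟪gradient L x, v⟫_ℝ - Lb * ‖v‖ ^ 2 * s)
      = ⟪gradient L x, v⟫_ℝ - Lb / 2 * ‖v‖ ^ 2 := by
    have h1 : IntervalIntegrable (fun s : ℝ => Lb * ‖v‖ ^ 2 * s) MeasureTheory.volume 0 1 :=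
      (continuous_const.mul continuous_id').intervalIntegrable 0 1
    rw [intervalIntegral.integral_sub intervalIntegrable_const h1,
      intervalIntegral.integral_const_mul, integral_id]
    simp; ring
  linarith [key ▸ mono, comp ▸ mono]

lemma condexp_clm_comm {Ω : Type*} {m m0 : MeasurableSpace Ω} (hm : m ≤ m0)
    {μ : Measure Ω} [IsFiniteMeasure μ]
    {E F : Type*} [NormedAddCommGroup E] [NormedSpace ℝ E] [CompleteSpace E]
    [NormedAddCommGroup F] [NormedSpace ℝ F] [CompleteSpace F]
    (Λ : E →L[ℝ] F) {f : Ω → E} (hf : Integrable f μ) :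
    (fun ω => Λ ((μ[f|m]) ω)) =ᵐ[μ] μ[fun ω => Λ (f ω)|m] := by
  refine ae_eq_condExp_of_forall_setIntegral_eq hm (Λ.integrable_comp hf)
    (fun s _ _ => (Λ.integrable_comp integrable_condExp).integrableOn)
    (fun s hs hμs => ?_) ?_
  · rw [Λ.integral_comp_comm integrable_condExp.integrableOn,
      Λ.integral_comp_comm hf.integrableOn, setIntegral_condExp hm hf hs]
  · exact (Λ.continuous.comp_stronglyMeasurable stronglyMeasurable_condExp).aestronglyMeasurable

lemma coord_abs_le_norm {d : ℕ} (x : EuclideanSpace ℝ (Fin d)) (i : Fin d) : |x i| ≤ ‖x‖ := by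
  rw [EuclideanSpace.norm_eq, ← Real.sqrt_sq_eq_abs]
  apply Real.sqrt_le_sqrt
  have := Finset.single_le_sum (f := fun j => ‖x j‖ ^ 2)
    (fun j _ => sq_nonneg _) (Finset.mem_univ i)
  simpa [Real.norm_eq_abs, sq_abs] using this

lemma inner_integral_condexp_eq {Ω : Type*} {m m0 : MeasurableSpace Ω} (hm : m ≤ m0)
    (μ : Measure Ω) [IsProbabilityMeasure μ] {d : ℕ}
    {X g : Ω → EuclideanSpace ℝ (Fin d)}
    (hX : Measurable[m] X) (hg : Measurable g)
    (hX2 : Integrable (fun ω => ‖X ω‖ ^ 2) μ) (hg2 : Integrable (fun ω => ‖g ω‖ ^ 2) μ)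
    (hcond : μ[g|m] =ᵐ[μ] X) :
    ∫ ω, ⟪X ω, g ω⟫_ℝ ∂μ = ∫ ω, ‖X ω‖ ^ 2 ∂μ := by
  have hXm : Measurable X := hX.mono hm le_rfl
  have intg' : Integrable g μ := by
    refine Integrable.mono' ((integrable_const (1:ℝ)).add hg2)
      hg.aestronglyMeasurable (Filter.Eventually.of_forall fun ω => ?_)
    simp only [Pi.add_apply]
    nlinarith [norm_nonneg (g ω), sq_nonneg (‖g ω‖ - 1)]
  have hXi : ∀ i : Fin d, StronglyMeasurable[m] fun ω => X ω i := fun i =>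
    (((EuclideanSpace.proj i (𝕜 := ℝ)).continuous.measurable).comp hX).stronglyMeasurable
  have hinti : ∀ i : Fin d, Integrable (fun ω => X ω i * g ω i) μ := by
    intro i
    refine Integrable.mono' (hX2.add hg2)
      (((((EuclideanSpace.proj i (𝕜 := ℝ)).continuous.measurable).comp hXm).mul
        (((EuclideanSpace.proj i (𝕜 := ℝ)).continuous.measurable).comp hg)).aestronglyMeasurable)
      (Filter.Eventually.of_forall fun ω => ?_)
    simp only [Pi.add_apply, Real.norm_eq_abs, abs_mul]
    nlinarith [mul_le_mul (coord_abs_le_norm (X ω) i) (coord_abs_le_norm (g ω) i)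
        (abs_nonneg _) (norm_nonneg _),
      sq_nonneg (‖X ω‖ - ‖g ω‖), norm_nonneg (X ω), norm_nonneg (g ω)]
  have hintii : ∀ i : Fin d, Integrable (fun ω => X ω i * X ω i) μ := by
    intro i
    refine Integrable.mono' hX2
      ((((((EuclideanSpace.proj i (𝕜 := ℝ)).continuous.measurable).comp hXm)).mul
        ((((EuclideanSpace.proj i (𝕜 := ℝ)).continuous.measurable).comp hXm))).aestronglyMeasurable)
      (Filter.Eventually.of_forall fun ω => ?_)
    simp only [Real.norm_eq_abs, abs_mul]
    nlinarith [mul_le_mul (coord_abs_le_norm (X ω) i) (coord_abs_le_norm (X ω) i)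
        (abs_nonneg _) (norm_nonneg _)]
  have intgi : ∀ i : Fin d, Integrable (fun ω => g ω i) μ := fun i =>
    (EuclideanSpace.proj i (𝕜 := ℝ)).integrable_comp intg'
  have hcoord : ∀ i : Fin d, (fun ω => X ω i) =ᵐ[μ] μ[fun ω => g ω i|m] := by
    intro i
    have h1 := condexp_clm_comm hm (EuclideanSpace.proj i (𝕜 := ℝ)) intg'
    filter_upwards [h1, hcond] with ω h1ω h2ω
    simp only [PiLp.proj_apply] at h1ω
    rw [← h1ω, h2ω]
  have key_i : ∀ i : Fin d, ∫ ω, X ω i * g ω i ∂μ = ∫ ω, X ω i * X ω i ∂μ := by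
    intro i
    have h2 : μ[(fun ω => X ω i) * fun ω => g ω i|m]
        =ᵐ[μ] (fun ω => X ω i) * μ[fun ω => g ω i|m] :=
      condExp_mul_of_stronglyMeasurable_left (hXi i) (hinti i) (intgi i)
    calc ∫ ω, X ω i * g ω i ∂μ
        = ∫ ω, (μ[(fun ω => X ω i) * fun ω => g ω i|m]) ω ∂μ :=
          (integral_condExp (f := (fun ω => X ω i) * fun ω => g ω i) hm).symm
      _ = ∫ ω, X ω i * X ω i ∂μ := by
          refine integral_congr_ae ?_
          filter_upwards [h2, hcoord i] with ω hω h3ω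
          simp only [Pi.mul_apply] at hω
          rw [hω, ← h3ω]
  calc ∫ ω, ⟪X ω, g ω⟫_ℝ ∂μ
      = ∫ ω, ∑ i, X ω i * g ω i ∂μ := by
        refine integral_congr_ae (Filter.Eventually.of_forall fun ω => ?_)
        simp [PiLp.inner_apply, RCLike.inner_apply]
        exact Finset.sum_congr rfl fun i _ => mul_comm _ _
    _ = ∑ i, ∫ ω, X ω i * g ω i ∂μ := integral_finset_sum _ fun i _ => hinti i
    _ = ∑ i, ∫ ω, X ω i * X ω i ∂μ := by
        exact Finset.sum_congr rfl fun i _ => key_i i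
    _ = ∫ ω, ∑ i, X ω i * X ω i ∂μ := (integral_finset_sum _ fun i _ => hintii i).symm
    _ = ∫ ω, ‖X ω‖ ^ 2 ∂μ := by
        refine integral_congr_ae (Filter.Eventually.of_forall fun ω => ?_)
        show ∑ i, X ω i * X ω i = ‖X ω‖ ^ 2
        rw [EuclideanSpace.norm_eq, Real.sq_sqrt (Finset.sum_nonneg fun i _ => sq_nonneg _)]
        simp [Real.norm_eq_abs, sq]

set_option maxHeartbeats 2000000 in
/-- **Phase-wise stationary neighborhood for the true objective (explicit bound).**
Under the GRPO assumptions on the surrogate `L` and the uniform surrogate-to-true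
gradient gap bound `E‖∇J(θₜ) − ∇L(θₜ)‖² ≤ B`, the averaged expected squared gradient
norm of the true objective `J` satisfies
`(1/T) ∑ₜ E‖∇J(θₜ)‖² ≤ 4(L* − E L(θ₀))/(η₀√T) + 2 L_b η₀ σ²/(G√T) + 2B`. -/
theorem grpo_true_objective_neighborhood
    {Ω : Type*} {m0 : MeasurableSpace Ω} (P : Measure Ω) [IsProbabilityMeasure P]
    (ℱ : Filtration ℕ m0)
    (d : ℕ) (hd : 1 ≤ d)
    (L J : EuclideanSpace ℝ (Fin d) → ℝ) (Lb Lstar : ℝ) (hLb : 0 < Lb)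
    (hdiffL : Differentiable ℝ L) (hdiffJ : Differentiable ℝ J)
    (hlip : ∀ x y, ‖gradient L x - gradient L y‖ ≤ Lb * ‖x - y‖)
    (hbound : ∀ x, L x ≤ Lstar)
    (T : ℕ) (hT : 1 ≤ T) (G : ℝ) (hG : 0 < G) (σ2 : ℝ) (hσ2 : 0 ≤ σ2)
    (B : ℝ) (hB : 0 ≤ B)
    (η0 : ℝ) (hη0 : 0 < η0) (hη0' : η0 ≤ 1 / Lb)
    (θ g : ℕ → Ω → EuclideanSpace ℝ (Fin d))
    (hθmeas : ∀ t ≤ T, Measurable[ℱ t] (θ t))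
    (hgmeas : ∀ t < T, Measurable[ℱ (t + 1)] (g t))
    (hupdate : ∀ t < T, ∀ ω, θ (t + 1) ω = θ t ω + (η0 / Real.sqrt T) • g t ω)
    (hunbiased : ∀ t < T, P[g t | ℱ t] =ᵐ[P] fun ω => gradient L (θ t ω))
    (hvar : ∀ t < T, ∀ᵐ ω ∂P,
      (P[fun ω' => ‖g t ω' - gradient L (θ t ω')‖ ^ 2 | ℱ t]) ω ≤ σ2 / G)
    (hintL : ∀ t ≤ T, Integrable (fun ω => L (θ t ω)) P)
    (hintgradL : ∀ t ≤ T, Integrable (fun ω => ‖gradient L (θ t ω)‖ ^ 2) P)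
    (hintgradJ : ∀ t < T, Integrable (fun ω => ‖gradient J (θ t ω)‖ ^ 2) P)
    (hintg : ∀ t < T, Integrable (fun ω => ‖g t ω‖ ^ 2) P)
    (hgap : ∀ t < T,
      ∫ ω, ‖gradient J (θ t ω) - gradient L (θ t ω)‖ ^ 2 ∂P ≤ B) :
    (1 / (T : ℝ)) * ∑ t ∈ Finset.range T, ∫ ω, ‖gradient J (θ t ω)‖ ^ 2 ∂P
      ≤ 4 * (Lstar - ∫ ω, L (θ 0 ω) ∂P) / (η0 * Real.sqrt T)
        + 2 * Lb * η0 * σ2 / (G * Real.sqrt T) + 2 * B := by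
  have hT0 : (0 : ℝ) < T := by exact_mod_cast hT
  obtain ⟨s, hs_def⟩ : ∃ x : ℝ, x = Real.sqrt T := ⟨_, rfl⟩
  rw [← hs_def] at hupdate ⊢
  have hs0 : 0 < s := by rw [hs_def]; exact Real.sqrt_pos.2 hT0
  have hss : s * s = (T : ℝ) := by rw [hs_def]; exact Real.mul_self_sqrt hT0.le
  have hs1 : 1 ≤ s := by nlinarith [(by exact_mod_cast hT : (1:ℝ) ≤ (T:ℝ))]
  obtain ⟨η, hη_def⟩ : ∃ x : ℝ, x = η0 / s := ⟨_, rfl⟩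
  rw [← hη_def] at hupdate
  have hηpos : 0 < η := by rw [hη_def]; exact div_pos hη0 hs0
  have hLbη0 : Lb * η0 ≤ 1 := by
    rw [le_div_iff₀ hLb] at hη0'; linarith
  have hLbη : Lb * η ≤ 1 := by
    rw [hη_def, mul_div_assoc', div_le_one hs0]; nlinarith
  have hgc : Continuous (gradient L) := by
    refine (LipschitzWith.of_dist_le_mul (K := ⟨Lb, hLb.le⟩) ?_).continuous
    intro a b; rw [dist_eq_norm, dist_eq_norm]; exact hlip a b
  have hgJm : Measurable (gradient J) := by
    have h : gradient J = fun x =>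
        (InnerProductSpace.toDual ℝ (EuclideanSpace ℝ (Fin d))).symm (fderiv ℝ J x) := rfl
    rw [h]
    exact ((InnerProductSpace.toDual ℝ
      (EuclideanSpace ℝ (Fin d))).symm.continuous.measurable).comp (measurable_fderiv ℝ J)
  have hA0 : ∀ t : ℕ, 0 ≤ ∫ ω, ‖gradient L (θ t ω)‖ ^ 2 ∂P :=
    fun t => integral_nonneg fun ω => sq_nonneg _
  -- main per-step estimate
  have step : ∀ t, t < T →
      (∫ ω, L (θ t ω) ∂P) + η / 2 * (∫ ω, ‖gradient L (θ t ω)‖ ^ 2 ∂P) - Lb * η ^ 2 / 2 * (σ2 / G)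
        ≤ ∫ ω, L (θ (t + 1) ω) ∂P := by
    intro t ht
    have htT : t ≤ T := ht.le
    have ht1T : t + 1 ≤ T := ht
    have hmθF : Measurable[ℱ t] (θ t) := hθmeas t htT
    have hmθ : Measurable (θ t) := hmθF.mono (ℱ.le t) le_rfl
    have hmg : Measurable (g t) := (hgmeas t ht).mono (ℱ.le (t + 1)) le_rfl
    have hmXF : Measurable[ℱ t] fun ω => gradient L (θ t ω) := hgc.measurable.comp hmθF
    have hmX : Measurable fun ω => gradient L (θ t ω) := hgc.measurable.comp hmθ
    have intInner : Integrable (fun ω => ⟪gradient L (θ t ω), g t ω⟫_ℝ) P := by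
      refine Integrable.mono' ((hintgradL t htT).add (hintg t ht))
        (hmX.aestronglyMeasurable.inner hmg.aestronglyMeasurable)
        (Filter.Eventually.of_forall fun ω => ?_)
      simp only [Pi.add_apply, Real.norm_eq_abs]
      have h1 := abs_real_inner_le_norm (gradient L (θ t ω)) (g t ω)
      nlinarith [norm_nonneg (gradient L (θ t ω)), norm_nonneg (g t ω),
        sq_nonneg (‖gradient L (θ t ω)‖ - ‖g t ω‖)]
    have intsub2 : Integrable (fun ω => ‖g t ω - gradient L (θ t ω)‖ ^ 2) P := by
      refine Integrable.mono' (((hintg t ht).const_mul 2).add ((hintgradL t htT).const_mul 2))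
        (((hmg.sub hmX).norm.pow_const 2).aestronglyMeasurable)
        (Filter.Eventually.of_forall fun ω => ?_)
      simp only [Pi.add_apply, Real.norm_eq_abs]
      rw [abs_of_nonneg (sq_nonneg _)]
      nlinarith [mul_self_le_mul_self (norm_nonneg (g t ω - gradient L (θ t ω)))
          (norm_sub_le (g t ω) (gradient L (θ t ω))),
        sq_nonneg (‖g t ω‖ - ‖gradient L (θ t ω)‖), norm_nonneg (g t ω),
        norm_nonneg (gradient L (θ t ω))]
    -- key identities and estimates
    have e1 : ∫ ω, ⟪gradient L (θ t ω), g t ω⟫_ℝ ∂P = (∫ ω, ‖gradient L (θ t ω)‖ ^ 2 ∂P) :=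
      inner_integral_condexp_eq (ℱ.le t) P hmXF hmg (hintgradL t htT) (hintg t ht)
        (hunbiased t ht)
    have e2 : ∫ ω, ‖g t ω - gradient L (θ t ω)‖ ^ 2 ∂P ≤ σ2 / G := by
      calc ∫ ω, ‖g t ω - gradient L (θ t ω)‖ ^ 2 ∂P
          = ∫ ω, (P[fun ω' => ‖g t ω' - gradient L (θ t ω')‖ ^ 2|ℱ t]) ω ∂P :=
            (integral_condExp (ℱ.le t)).symm
        _ ≤ ∫ _ω, σ2 / G ∂P :=
            integral_mono_ae integrable_condExp (integrable_const _) (hvar t ht)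
        _ = σ2 / G := by simp
    have e3 : ∫ ω, ‖g t ω - gradient L (θ t ω)‖ ^ 2 ∂P
        = (∫ ω, ‖g t ω‖ ^ 2 ∂P) - 2 * ∫ ω, ⟪gradient L (θ t ω), g t ω⟫_ℝ ∂P + (∫ ω, ‖gradient L (θ t ω)‖ ^ 2 ∂P) := by
      have hfe : (fun ω => ‖g t ω - gradient L (θ t ω)‖ ^ 2)
          = fun ω => ‖g t ω‖ ^ 2 - 2 * ⟪gradient L (θ t ω), g t ω⟫_ℝ
              + ‖gradient L (θ t ω)‖ ^ 2 := by
        funext ω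
        rw [norm_sub_sq_real, real_inner_comm]
      have i1 : Integrable (fun ω => ‖g t ω‖ ^ 2
          - 2 * ⟪gradient L (θ t ω), g t ω⟫_ℝ) P := (hintg t ht).sub (intInner.const_mul 2)
      rw [hfe, integral_add i1 (hintgradL t htT),
        integral_sub (hintg t ht) (intInner.const_mul 2), integral_const_mul]
    have hg2le : ∫ ω, ‖g t ω‖ ^ 2 ∂P ≤ σ2 / G + (∫ ω, ‖gradient L (θ t ω)‖ ^ 2 ∂P) := by
      rw [e1] at e3; linarith
    -- integrated descent inequality
    have hpt : (fun ω => L (θ t ω) + η * ⟪gradient L (θ t ω), g t ω⟫_ℝ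
          - Lb / 2 * η ^ 2 * ‖g t ω‖ ^ 2) ≤ fun ω => L (θ (t + 1) ω) := by
      intro ω
      have h := descent_aux L Lb hLb.le hdiffL hlip (θ t ω) (η • g t ω)
      rw [real_inner_smul_right] at h
      have hn : ‖η • g t ω‖ ^ 2 = η ^ 2 * ‖g t ω‖ ^ 2 := by
        rw [norm_smul, mul_pow, Real.norm_eq_abs, sq_abs]
      rw [hn] at h
      show L (θ t ω) + η * ⟪gradient L (θ t ω), g t ω⟫_ℝ
          - Lb / 2 * η ^ 2 * ‖g t ω‖ ^ 2 ≤ L (θ (t + 1) ω)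
      rw [hupdate t ht ω]
      ring_nf at h ⊢
      linarith
    have hintLHS1 : Integrable (fun ω => L (θ t ω)
        + η * ⟪gradient L (θ t ω), g t ω⟫_ℝ) P := (hintL t htT).add (intInner.const_mul η)
    have e4 : (∫ ω, L (θ t ω) ∂P) + η * (∫ ω, ⟪gradient L (θ t ω), g t ω⟫_ℝ ∂P)
        - Lb / 2 * η ^ 2 * ∫ ω, ‖g t ω‖ ^ 2 ∂P ≤ ∫ ω, L (θ (t + 1) ω) ∂P := by
      have intLHS : Integrable (fun ω => L (θ t ω)
          + η * ⟪gradient L (θ t ω), g t ω⟫_ℝ - Lb / 2 * η ^ 2 * ‖g t ω‖ ^ 2) P :=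
        hintLHS1.sub ((hintg t ht).const_mul (Lb / 2 * η ^ 2))
      have h := integral_mono intLHS (hintL (t + 1) ht1T) hpt
      rwa [integral_sub hintLHS1 ((hintg t ht).const_mul _),
        integral_add (hintL t htT) (intInner.const_mul η),
        integral_const_mul, integral_const_mul] at h
    rw [e1] at e4
    have hc : (0:ℝ) ≤ Lb / 2 * η ^ 2 := by positivity
    have hA0t := hA0 t
    revert e4 hg2le hA0t
    generalize (∫ ω, ‖gradient L (θ t ω)‖ ^ 2 ∂P) = IA
    generalize (∫ ω, ‖g t ω‖ ^ 2 ∂P) = IG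
    generalize (∫ ω, L (θ t ω) ∂P) = IL
    generalize (∫ ω, L (θ (t + 1) ω) ∂P) = IL'
    intro hg2le e4 hA0t
    have k1 : Lb / 2 * η ^ 2 * IG ≤ Lb / 2 * η ^ 2 * (σ2 / G + IA) :=
      mul_le_mul_of_nonneg_left hg2le hc
    have k2 : Lb / 2 * η ^ 2 * IA ≤ η / 2 * IA := by
      have h' : Lb * η * IA ≤ 1 * IA := mul_le_mul_of_nonneg_right hLbη hA0t
      nlinarith only [mul_le_mul_of_nonneg_left h' (by positivity : (0:ℝ) ≤ η / 2), h', hA0t, hηpos]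
    linarith only [k1, k2, e4, hg2le, hA0t]
  -- telescoping
  have tele : ∀ n, n ≤ T → (∫ ω, L (θ 0 ω) ∂P) + η / 2 * ∑ t ∈ Finset.range n, ∫ ω, ‖gradient L (θ t ω)‖ ^ 2 ∂P
      ≤ (∫ ω, L (θ n ω) ∂P) + n * (Lb * η ^ 2 / 2 * (σ2 / G)) := by
    intro n
    induction n with
    | zero => intro _; simp
    | succ n ih =>
        intro h
        have hn : n < T := Nat.lt_of_succ_le h
        have h1 := ih hn.le
        have h2 := step n hn
        rw [Finset.sum_range_succ]
        push_cast
        have hcn : (0:ℝ) ≤ Lb * η ^ 2 / 2 * (σ2 / G) := by positivity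
        revert h1 h2
        generalize (∫ ω, L (θ 0 ω) ∂P) = IL0
        generalize (∑ t ∈ Finset.range n, ∫ ω, ‖gradient L (θ t ω)‖ ^ 2 ∂P) = S
        generalize (∫ ω, ‖gradient L (θ n ω)‖ ^ 2 ∂P) = IAn
        generalize (∫ ω, L (θ n ω) ∂P) = ILn
        generalize (∫ ω, L (θ (n + 1) ω) ∂P) = ILn1
        intro h1 h2
        linarith only [h1, h2, hcn, hηpos]
  have hLT : (∫ ω, L (θ T ω) ∂P) ≤ Lstar := by
    have h := integral_mono (hintL T le_rfl) (integrable_const Lstar)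
      (fun ω => hbound (θ T ω))
    simpa using h
  have htele := tele T le_rfl
  -- per-t bound for J
  have hJ : ∀ t ∈ Finset.range T, (∫ ω, ‖gradient J (θ t ω)‖ ^ 2 ∂P) ≤ 2 * B + 2 * (∫ ω, ‖gradient L (θ t ω)‖ ^ 2 ∂P) := by
    intro t ht'
    rw [Finset.mem_range] at ht'
    have hmθ : Measurable (θ t) := (hθmeas t ht'.le).mono (ℱ.le t) le_rfl
    have hmJθ : Measurable fun ω => gradient J (θ t ω) := hgJm.comp hmθ
    have hmXθ : Measurable fun ω => gradient L (θ t ω) := hgc.measurable.comp hmθ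
    have intJsub : Integrable
        (fun ω => ‖gradient J (θ t ω) - gradient L (θ t ω)‖ ^ 2) P := by
      refine Integrable.mono'
        (((hintgradJ t ht').const_mul 2).add ((hintgradL t ht'.le).const_mul 2))
        (((hmJθ.sub hmXθ).norm.pow_const 2).aestronglyMeasurable)
        (Filter.Eventually.of_forall fun ω => ?_)
      simp only [Pi.add_apply, Real.norm_eq_abs]
      rw [abs_of_nonneg (sq_nonneg _)]
      nlinarith [mul_self_le_mul_self (norm_nonneg (gradient J (θ t ω) - gradient L (θ t ω)))
          (norm_sub_le (gradient J (θ t ω)) (gradient L (θ t ω))),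
        sq_nonneg (‖gradient J (θ t ω)‖ - ‖gradient L (θ t ω)‖),
        norm_nonneg (gradient J (θ t ω)), norm_nonneg (gradient L (θ t ω))]
    have hpt : (fun ω => ‖gradient J (θ t ω)‖ ^ 2)
        ≤ fun ω => 2 * ‖gradient J (θ t ω) - gradient L (θ t ω)‖ ^ 2
            + 2 * ‖gradient L (θ t ω)‖ ^ 2 := by
      intro ω
      have h1 : ‖gradient J (θ t ω)‖
          ≤ ‖gradient J (θ t ω) - gradient L (θ t ω)‖ + ‖gradient L (θ t ω)‖ := by
        simpa using norm_add_le (gradient J (θ t ω) - gradient L (θ t ω)) (gradient L (θ t ω))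
      simp only []
      nlinarith [mul_self_le_mul_self (norm_nonneg (gradient J (θ t ω))) h1,
        sq_nonneg (‖gradient J (θ t ω) - gradient L (θ t ω)‖ - ‖gradient L (θ t ω)‖),
        norm_nonneg (gradient J (θ t ω) - gradient L (θ t ω)),
        norm_nonneg (gradient L (θ t ω))]
    calc ∫ ω, ‖gradient J (θ t ω)‖ ^ 2 ∂P
        ≤ ∫ ω, (2 * ‖gradient J (θ t ω) - gradient L (θ t ω)‖ ^ 2
            + 2 * ‖gradient L (θ t ω)‖ ^ 2) ∂P :=
          integral_mono (hintgradJ t ht')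
            ((intJsub.const_mul 2).add ((hintgradL t ht'.le).const_mul 2)) hpt
      _ = 2 * (∫ ω, ‖gradient J (θ t ω) - gradient L (θ t ω)‖ ^ 2 ∂P) + 2 * (∫ ω, ‖gradient L (θ t ω)‖ ^ 2 ∂P) := by
          rw [integral_add (intJsub.const_mul 2) ((hintgradL t ht'.le).const_mul 2),
            integral_const_mul, integral_const_mul]
      _ ≤ 2 * B + 2 * (∫ ω, ‖gradient L (θ t ω)‖ ^ 2 ∂P) := by
          have hgp := hgap t ht'
          revert hgp
          generalize (∫ ω, ‖gradient J (θ t ω) - gradient L (θ t ω)‖ ^ 2 ∂P) = IJL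
          generalize (∫ ω, ‖gradient L (θ t ω)‖ ^ 2 ∂P) = IA
          intro hgp
          linarith only [hgp]
  have hsumJ : ∑ t ∈ Finset.range T, ∫ ω, ‖gradient J (θ t ω)‖ ^ 2 ∂P
      ≤ (T : ℝ) * (2 * B) + 2 * ∑ t ∈ Finset.range T, ∫ ω, ‖gradient L (θ t ω)‖ ^ 2 ∂P := by
    calc ∑ t ∈ Finset.range T, ∫ ω, ‖gradient J (θ t ω)‖ ^ 2 ∂P
        ≤ ∑ t ∈ Finset.range T, (2 * B + 2 * (∫ ω, ‖gradient L (θ t ω)‖ ^ 2 ∂P)) := Finset.sum_le_sum hJ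
      _ = (T : ℝ) * (2 * B) + 2 * ∑ t ∈ Finset.range T, ∫ ω, ‖gradient L (θ t ω)‖ ^ 2 ∂P := by
          rw [Finset.sum_add_distrib, Finset.sum_const, Finset.card_range, ← Finset.mul_sum]
          push_cast
          ring
  -- final arithmetic
  obtain ⟨SA, hSA_def⟩ : ∃ x : ℝ,
      x = ∑ t ∈ Finset.range T, ∫ ω, ‖gradient L (θ t ω)‖ ^ 2 ∂P := ⟨_, rfl⟩
  rw [← hSA_def] at htele hsumJ
  obtain ⟨SJ, hSJ_def⟩ : ∃ x : ℝ,
      x = ∑ t ∈ Finset.range T, ∫ ω, ‖gradient J (θ t ω)‖ ^ 2 ∂P := ⟨_, rfl⟩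
  rw [← hSJ_def] at hsumJ ⊢
  obtain ⟨EL0, hEL0_def⟩ : ∃ x : ℝ, x = ∫ ω, L (θ 0 ω) ∂P := ⟨_, rfl⟩
  rw [← hEL0_def] at htele ⊢
  obtain ⟨ELT, hELT_def⟩ : ∃ x : ℝ, x = ∫ ω, L (θ T ω) ∂P := ⟨_, rfl⟩
  rw [← hELT_def] at htele hLT
  have hq : η / 2 * SA ≤ (Lstar - EL0)
      + (T : ℝ) * (Lb * η ^ 2 / 2 * (σ2 / G)) := by linarith only [htele, hLT]
  have h1 : (1 / (T : ℝ)) * SJ ≤ 2 * B + 2 / (T : ℝ) * SA := by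
    have h := mul_le_mul_of_nonneg_left hsumJ (le_of_lt (one_div_pos.2 hT0))
    have heq : (1 / (T : ℝ)) * ((T : ℝ) * (2 * B) + 2 * SA) = 2 * B + 2 / (T : ℝ) * SA := by
      field_simp
    linarith only [h, heq]
  have h2 : 2 / (T : ℝ) * SA ≤ 4 * (Lstar - EL0) / (η0 * s)
      + 2 * Lb * η0 * σ2 / (G * s) := by
    have e : 2 / (T : ℝ) * SA = (4 / (η0 * s)) * (η / 2 * SA) := by
      rw [← hss, hη_def]
      field_simp
      ring
    calc 2 / (T : ℝ) * SA = (4 / (η0 * s)) * (η / 2 * SA) := e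
      _ ≤ (4 / (η0 * s)) * ((Lstar - EL0)
            + (T : ℝ) * (Lb * η ^ 2 / 2 * (σ2 / G))) :=
          mul_le_mul_of_nonneg_left hq (by positivity)
      _ = 4 * (Lstar - EL0) / (η0 * s) + 2 * Lb * η0 * σ2 / (G * s) := by
          rw [← hss, hη_def]
          field_simp
          ring
  linarith only [h1, h2]
end
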